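/- arXiv:1812.08399 — 3 statements merged into one kernel-verified Lean document; each statement's English description precedes it below -/
import Mathlib

section
/- Let P be a stochastic strongly connected N×N matrix, A = (A_1, ..., A_N) an irreducible N-tuple of d×d real matrices, and ‖·‖_B a Barabanov norm for A. If ρ(A_{i_k} ⋯ A_{i_1})^{1/k} = ρ_d(A) for every P-cycle (i_1, ..., i_k), then ‖A_{i_k} ⋯ A_{i_1}‖_B^{1/k} = ρ_d(A) for every P-word (i_1, ..., i_k). -/
/-!
The extremal property `‖A_i x‖_B ≤ ρ ‖x‖_B` of a Barabanov norm gives `‖A_w‖_B ≤ ρ^|w|` for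
every word `w`. Conversely, a `P`-word `w` extends to a `P`-cycle `c = w t` (stochasticity supplies
an edge leaving the last letter of `w`, strong connectivity a path back to its first letter), and
`ρ^|c| = ρ(A_c) ≤ ‖A_c‖_B ≤ ‖A_t‖_B ‖A_w‖_B ≤ ρ^|t| ‖A_w‖_B`, so `ρ^|w| ≤ ‖A_w‖_B` when `ρ > 0`.
The comparison `ρ(M) ≤ ‖M‖_B` comes from `|μ|^n ≤ ‖M^n‖_∞ ≤ C ‖M‖_B^n` for every eigenvalue `μ`
and every `n`, all norms on `ℝ^d` being equivalent.
-/

open scoped BigOperators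

noncomputable section
namespace JSRpaper

attribute [local instance] Matrix.linftyOpNormedRing

/-- Spectral radius of a real matrix: maximum modulus of its complex eigenvalues. -/
def specRad {n : Type*} [Fintype n] [DecidableEq n] (M : Matrix n n ℝ) : ℝ :=
  ⨆ μ ∈ spectrum ℂ (M.map (algebraMap ℝ ℂ)), ‖μ‖

/-- Product `A_{i_n} ⋯ A_{i_1}` along the word `w = (i_1, …, i_n)`. -/
def prodW {d : ℕ} {ι : Type*} {n : ℕ} (A : ι → Matrix (Fin d) (Fin d) ℝ)
    (w : Fin n → ι) : Matrix (Fin d) (Fin d) ℝ :=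
  ((List.ofFn w).map A).reverse.prod

/-- Deterministic joint spectral radius. -/
def jsr {d : ℕ} {ι : Type*} [Fintype ι] (A : ι → Matrix (Fin d) (Fin d) ℝ) : ℝ :=
  ⨅ n : ℕ, ⨆ w : Fin (n + 1) → ι, ‖prodW A w‖ ^ (((n : ℝ) + 1)⁻¹)

def IsStochastic {ι : Type*} [Fintype ι] (P : Matrix ι ι ℝ) : Prop :=
  (∀ i j, 0 ≤ P i j) ∧ ∀ i, ∑ j, P i j = 1

def IsInvProb {ι : Type*} [Fintype ι] (ν : ι → ℝ) (P : Matrix ι ι ℝ) : Prop :=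
  (∀ i, 0 ≤ ν i) ∧ (∑ i, ν i = 1) ∧ ∀ j, ∑ i, ν i * P i j = ν j

/-- Markov weight `ν_{i_1} p_{i_1 i_2} ⋯ p_{i_n i_{n+1}}` of the word `w = (i_1, …, i_{n+1})`. -/
def chainWt {ι : Type*} [Fintype ι] (ν : ι → ℝ) (P : Matrix ι ι ℝ) {n : ℕ}
    (w : Fin (n + 1) → ι) : ℝ :=
  ν (w 0) * ∏ t : Fin n, P (w t.castSucc) (w t.succ)

/-- Probabilistic joint spectral radius associated with the Markov chain `(ν, P)`. -/
def rhoP {d : ℕ} {ι : Type*} [Fintype ι] [DecidableEq ι] (ν : ι → ℝ) (P : Matrix ι ι ℝ)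
    (A : ι → Matrix (Fin d) (Fin d) ℝ) : ℝ :=
  Filter.atTop.limsup fun n : ℕ =>
    ∑ w : Fin (n + 1) → ι, chainWt ν P w * ‖prodW A w‖ ^ (((n : ℝ) + 1)⁻¹)

/-- `ρ_p(P, A)`: supremum over invariant probabilities of `P`. -/
def rhoPP {d : ℕ} {ι : Type*} [Fintype ι] [DecidableEq ι] (P : Matrix ι ι ℝ)
    (A : ι → Matrix (Fin d) (Fin d) ℝ) : ℝ :=
  sSup {r | ∃ ν, IsInvProb ν P ∧ r = rhoP ν P A}

/-- `ρ_p(A)`: supremum over all pairs `(ν, P)`. -/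
def rhoPsup {d : ℕ} {ι : Type*} [Fintype ι] [DecidableEq ι]
    (A : ι → Matrix (Fin d) (Fin d) ℝ) : ℝ :=
  sSup {r | ∃ ν P, IsStochastic P ∧ IsInvProb ν P ∧ r = rhoP ν P A}

/-- `(i_1, …, i_{k+1})` is a `P`-word. -/
def IsPWord {ι : Type*} (P : Matrix ι ι ℝ) {k : ℕ} (w : Fin (k + 1) → ι) : Prop :=
  ∀ t : Fin k, 0 < P (w t.castSucc) (w t.succ)

/-- `(i_1, …, i_{k+1})` is a `P`-cycle. -/
def IsPCycle {ι : Type*} (P : Matrix ι ι ℝ) {k : ℕ} (w : Fin (k + 1) → ι) : Prop :=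
  IsPWord P w ∧ 0 < P (w (Fin.last k)) (w 0)

/-- `(i_1, …, i_{k+1})` is a `(ν, P)`-cycle. -/
def IsNuPCycle {ι : Type*} (ν : ι → ℝ) (P : Matrix ι ι ℝ) {k : ℕ}
    (w : Fin (k + 1) → ι) : Prop :=
  IsPCycle P w ∧ 0 < ν (w 0)

/-- `P` is strongly connected: its directed graph (positive entries) is strongly connected. -/
def StronglyConnected {ι : Type*} (P : Matrix ι ι ℝ) : Prop :=
  ∀ i j : ι, ∃ (k : ℕ) (w : Fin (k + 1) → ι), w 0 = i ∧ w (Fin.last k) = j ∧ IsPWord P w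

/-- The `N`-tuple `A` is irreducible. -/
def IrredTuple {d : ℕ} {ι : Type*} (A : ι → Matrix (Fin d) (Fin d) ℝ) : Prop :=
  ∀ V : Submodule ℝ (Fin d → ℝ), (∀ i, ∀ x ∈ V, (A i).mulVec x ∈ V) → V = ⊥ ∨ V = ⊤

/-- `nB` is a Barabanov norm for `A`. -/
structure IsBarabanovNorm {d : ℕ} {ι : Type*} [Fintype ι]
    (A : ι → Matrix (Fin d) (Fin d) ℝ) (nB : (Fin d → ℝ) → ℝ) : Prop where
  nonneg : ∀ x, 0 ≤ nB x
  eq_zero_iff : ∀ x, nB x = 0 ↔ x = 0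
  add_le : ∀ x y, nB (x + y) ≤ nB x + nB y
  smul : ∀ (c : ℝ) (x), nB (c • x) = |c| * nB x
  extremal : ∀ i x, nB ((A i).mulVec x) ≤ jsr A * nB x
  attain : ∀ (x : Fin d → ℝ) (k : ℕ), ∃ σ : ℕ → ι,
    nB ((prodW A fun t : Fin k => σ (t.1 + 1)).mulVec x) = jsr A ^ k * nB x

/-- Matrix norm induced by the vector norm `nB`. -/
def indNorm {d : ℕ} (nB : (Fin d → ℝ) → ℝ) (M : Matrix (Fin d) (Fin d) ℝ) : ℝ :=
  sSup {r | ∃ x, nB x = 1 ∧ r = nB (M.mulVec x)}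

/-- Stochastic tensor of order `m + 2` (a Markov chain of order `m + 1`). -/
def IsStochasticTensor {N m : ℕ} (P : (Fin (m + 1) → Fin N) → Fin N → ℝ) : Prop :=
  (∀ u j, 0 ≤ P u j) ∧ ∀ u, ∑ j, P u j = 1

/-- Shift-invariant probability tensor for the order-`m + 1` chain `P`. -/
def IsInvProbTensor {N m : ℕ} (ν : (Fin (m + 1) → Fin N) → ℝ)
    (P : (Fin (m + 1) → Fin N) → Fin N → ℝ) : Prop :=
  (∀ u, 0 ≤ ν u) ∧ (∑ u, ν u = 1) ∧
    ∀ u : Fin (m + 1) → Fin N,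
      ∑ i : Fin N, ν (Fin.cons i (Fin.init u)) *
        P (Fin.cons i (Fin.init u)) (u (Fin.last m)) = ν u

/-- Probabilistic joint spectral radius for a Markov chain of order `m + 1`. -/
def rhoPTensor {d N m : ℕ} (ν : (Fin (m + 1) → Fin N) → ℝ)
    (P : (Fin (m + 1) → Fin N) → Fin N → ℝ)
    (A : Fin N → Matrix (Fin d) (Fin d) ℝ) : ℝ :=
  Filter.atTop.limsup fun n : ℕ =>
    ∑ w : Fin (n + m + 2) → Fin N,
      (ν (fun j : Fin (m + 1) => w ⟨j.1, by omega⟩) *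
        ∏ t : Fin (n + 1),
          P (fun j : Fin (m + 1) => w ⟨t.1 + j.1, by omega⟩) (w ⟨t.1 + m + 1, by omega⟩)) *
      ‖prodW A w‖ ^ (((n : ℝ) + m + 2)⁻¹)

/-- `ρ_p(m, A)`: supremum over all order-`m + 1` Markov chains. -/
def rhoPTensorSup {d N : ℕ} (m : ℕ) (A : Fin N → Matrix (Fin d) (Fin d) ℝ) : ℝ :=
  sSup {r | ∃ ν P, IsStochasticTensor P ∧ IsInvProbTensor ν P ∧ r = rhoPTensor (m := m) ν P A}

end JSRpaper

open scoped Matrix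

section NormEquivalence

variable {E : Type*} [NormedAddCommGroup E] [NormedSpace ℝ E] [FiniteDimensional ℝ E]
  (p : Seminorm ℝ E)

theorem Seminorm.exists_le_mul_norm : ∃ K, 0 < K ∧ ∀ x, p x ≤ K * ‖x‖ :=
  p.bound_of_continuous_normedSpace p.convexOn.locallyLipschitz.continuous

theorem Seminorm.exists_norm_le_mul (hp : ∀ x, p x = 0 → x = 0) :
    ∃ C, 0 < C ∧ ∀ x, ‖x‖ ≤ C * p x := by
  have hcont : ContinuousOn (fun x => (p x)⁻¹) (Metric.sphere 0 1) :=
    p.convexOn.locallyLipschitz.continuous.continuousOn.inv₀ fun x hx h => by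
      simp [hp x h] at hx
  obtain ⟨C, hC⟩ := (isCompact_sphere (0 : E) 1).exists_bound_of_continuousOn hcont
  refine ⟨max C 1, by positivity, fun x => ?_⟩
  rcases eq_or_ne x 0 with rfl | hx
  · simp
  have hxpos : 0 < ‖x‖ := norm_pos_iff.2 hx
  have hunit : ‖x‖⁻¹ • x ∈ Metric.sphere (0 : E) 1 := by
    simp [norm_smul, hxpos.ne']
  have hpx : 0 < p x := (apply_nonneg p x).lt_of_ne fun h => hx (hp x h.symm)
  have hbound : ‖x‖ / p x ≤ C := by
    simpa [map_smul_eq_mul, abs_of_pos hpx, div_eq_mul_inv, mul_comm] using hC _ hunit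
  rw [div_le_iff₀ hpx] at hbound
  exact hbound.trans (by gcongr; exact le_max_left _ _)

end NormEquivalence

theorem le_of_forall_pow_le_mul_pow {a b C : ℝ} (hb : 0 ≤ b) (h : ∀ n : ℕ, a ^ n ≤ C * b ^ n) :
    a ≤ b := by
  by_contra! hba
  rcases hb.eq_or_lt with rfl | hb
  · linarith [show a ≤ 0 by simpa using h 1]
  obtain ⟨n, hn⟩ := pow_unbounded_of_one_lt C ((one_lt_div hb).2 hba)
  rw [div_pow, lt_div_iff₀ (by positivity)] at hn
  exact (h n).not_gt hn

attribute [local instance] Matrix.linftyOpNormedAddCommGroup in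
theorem Matrix.linfty_opNorm_map_algebraMap {m n : Type*} [Fintype m] [Fintype n]
    (M : Matrix m n ℝ) :
    ‖M.map (algebraMap ℝ ℂ)‖ = ‖M‖ := by
  simp [Matrix.linfty_opNorm_def]

namespace JSRpaper

attribute [local instance] Matrix.linftyOpNormedRing Matrix.linftyOpNormedAlgebra

section InducedNorm

variable {d : ℕ}

theorem indNorm_le_of_forall {f : (Fin d → ℝ) → ℝ} {M : Matrix (Fin d) (Fin d) ℝ} {B : ℝ}
    (hB : 0 ≤ B) (h : ∀ x, f (M *ᵥ x) ≤ B * f x) : indNorm f M ≤ B :=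
  Real.sSup_le (by rintro r ⟨x, hx, rfl⟩; simpa [hx] using h x) hB

theorem indNorm_nonneg (p : Seminorm ℝ (Fin d → ℝ)) (M : Matrix (Fin d) (Fin d) ℝ) :
    0 ≤ indNorm p M :=
  Real.sSup_nonneg (by rintro r ⟨x, -, rfl⟩; exact apply_nonneg p _)

theorem specRad_nonneg {n : Type*} [Fintype n] [DecidableEq n] (M : Matrix n n ℝ) :
    0 ≤ specRad M :=
  Real.iSup_nonneg fun _ => Real.iSup_nonneg fun _ => norm_nonneg _

variable {p : Seminorm ℝ (Fin d → ℝ)} (hp : ∀ x, p x = 0 → x = 0)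
include hp

theorem bddAbove_indNorm_set (M : Matrix (Fin d) (Fin d) ℝ) :
    BddAbove {r | ∃ x, p x = 1 ∧ r = p (M *ᵥ x)} := by
  obtain ⟨K, hK, hpK⟩ := p.exists_le_mul_norm
  obtain ⟨C, hC, hCp⟩ := p.exists_norm_le_mul hp
  refine ⟨K * ‖M‖ * C, ?_⟩
  rintro r ⟨x, hx, rfl⟩
  calc p (M *ᵥ x) ≤ K * ‖M *ᵥ x‖ := hpK _
    _ ≤ K * (‖M‖ * (C * p x)) := by
        gcongr
        exact (Matrix.linfty_opNorm_mulVec M x).trans (by gcongr; exact hCp x)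
    _ = K * ‖M‖ * C := by rw [hx]; ring

theorem le_indNorm_mul (M : Matrix (Fin d) (Fin d) ℝ) (x : Fin d → ℝ) :
    p (M *ᵥ x) ≤ indNorm p M * p x := by
  rcases (apply_nonneg p x).eq_or_lt with hx | hx
  · simp [hp x hx.symm]
  have hunit : p ((p x)⁻¹ • x) = 1 := by
    rw [map_smul_eq_mul, Real.norm_of_nonneg (by positivity), inv_mul_cancel₀ hx.ne']
  have hle := le_csSup (bddAbove_indNorm_set hp M) ⟨_, hunit, rfl⟩
  rw [Matrix.mulVec_smul, map_smul_eq_mul, Real.norm_of_nonneg (by positivity),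
    inv_mul_le_iff₀ hx] at hle
  exact hle.trans_eq (mul_comm _ _)

theorem indNorm_mul_le (M M' : Matrix (Fin d) (Fin d) ℝ) :
    indNorm p (M * M') ≤ indNorm p M * indNorm p M' := by
  refine indNorm_le_of_forall (by positivity [indNorm_nonneg p M, indNorm_nonneg p M']) fun x => ?_
  rw [← Matrix.mulVec_mulVec, mul_assoc]
  exact (le_indNorm_mul hp M _).trans
    (mul_le_mul_of_nonneg_left (le_indNorm_mul hp M' x) (indNorm_nonneg p M))

theorem indNorm_pow_le (M : Matrix (Fin d) (Fin d) ℝ) (n : ℕ) :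
    indNorm p (M ^ n) ≤ indNorm p M ^ n := by
  induction n with
  | zero => exact indNorm_le_of_forall zero_le_one fun x => by simp
  | succ n ih =>
    rw [pow_succ, pow_succ]
    exact (indNorm_mul_le hp _ _).trans (mul_le_mul_of_nonneg_right ih (indNorm_nonneg p M))

theorem exists_norm_le_mul_indNorm : ∃ C, 0 < C ∧ ∀ M : Matrix (Fin d) (Fin d) ℝ,
    ‖M‖ ≤ C * indNorm p M := by
  obtain ⟨K, hK, hpK⟩ := p.exists_le_mul_norm
  obtain ⟨C, hC, hCp⟩ := p.exists_norm_le_mul hp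
  refine ⟨C * K, by positivity, fun M => ?_⟩
  rw [Matrix.linfty_opNorm_eq_opNorm]
  refine ContinuousLinearMap.opNorm_le_bound _ (by positivity [indNorm_nonneg p M]) fun x => ?_
  calc ‖M *ᵥ x‖ ≤ C * p (M *ᵥ x) := hCp _
    _ ≤ C * (indNorm p M * (K * ‖x‖)) := by
        gcongr
        exact (le_indNorm_mul hp M x).trans (by gcongr; exacts [indNorm_nonneg p M, hpK x])
    _ = C * K * indNorm p M * ‖x‖ := by ring

theorem specRad_le_indNorm (M : Matrix (Fin d) (Fin d) ℝ) : specRad M ≤ indNorm p M := by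
  obtain ⟨C, hC, hMC⟩ := exists_norm_le_mul_indNorm hp
  refine Real.iSup_le (fun μ => Real.iSup_le (fun hμ => ?_) (indNorm_nonneg p M))
    (indNorm_nonneg p M)
  refine le_of_forall_pow_le_mul_pow (C := C * ‖(1 : Matrix (Fin d) (Fin d) ℂ)‖)
    (indNorm_nonneg p M) fun n => ?_
  calc ‖μ‖ ^ n = ‖μ ^ n‖ := (norm_pow μ n).symm
    _ ≤ ‖M.map (algebraMap ℝ ℂ) ^ n‖ * ‖(1 : Matrix (Fin d) (Fin d) ℂ)‖ :=
        spectrum.norm_le_norm_mul_of_mem (spectrum.pow_mem_pow _ n hμ)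
    _ = ‖M ^ n‖ * ‖(1 : Matrix (Fin d) (Fin d) ℂ)‖ := by
        rw [← Matrix.map_pow, Matrix.linfty_opNorm_map_algebraMap]
    _ ≤ C * indNorm p M ^ n * ‖(1 : Matrix (Fin d) (Fin d) ℂ)‖ := by
        gcongr
        exact (hMC _).trans (by gcongr; exact indNorm_pow_le hp M n)
    _ = C * ‖(1 : Matrix (Fin d) (Fin d) ℂ)‖ * indNorm p M ^ n := by ring

end InducedNorm

theorem List.exists_ofFn_eq_of_ne_nil {α : Type*} {l : List α} (hl : l ≠ []) :
    ∃ (m : ℕ) (w : Fin (m + 1) → α), List.ofFn w = l := by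
  obtain ⟨m, hm⟩ := Nat.exists_eq_succ_of_ne_zero (List.length_pos_iff.2 hl).ne'
  exact ⟨m, fun i => l[i.1], List.ext_getElem (by simp [hm]) fun i _ _ => List.getElem_ofFn _⟩

section Words

variable {ι : Type*} {P : Matrix ι ι ℝ} {k : ℕ} {w : Fin (k + 1) → ι}

theorem isPWord_iff_isChain : IsPWord P w ↔ (List.ofFn w).IsChain (fun i j => 0 < P i j) := by
  rw [List.isChain_iff_getElem]
  simp only [List.length_ofFn, List.getElem_ofFn, IsPWord, Fin.forall_iff]
  exact ⟨fun h i hi => h i (by omega), fun h i hi => h i (by omega)⟩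

theorem isPCycle_iff_isChain :
    IsPCycle P w ↔ (List.ofFn w ++ [w 0]).IsChain (fun i j => 0 < P i j) := by
  rw [List.isChain_append, ← isPWord_iff_isChain, List.getLast?_eq_some_getLast (by simp),
    List.getLast_ofFn_succ]
  simp only [IsPCycle, List.isChain_singleton, List.head?_cons, Option.mem_def, Option.some.injEq,
    forall_eq', true_and]

theorem IsStochastic.exists_pos [Fintype ι] (hP : IsStochastic P) (i : ι) : ∃ j, 0 < P i j := by
  by_contra! h
  linarith [hP.2 i, Finset.sum_nonpos fun j (_ : j ∈ Finset.univ) => h j]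

theorem IsPWord.exists_isPCycle_ofFn_eq_append [Fintype ι] (hP : IsStochastic P)
    (hsc : StronglyConnected P) (hw : IsPWord P w) :
    ∃ (m : ℕ) (c : Fin (m + 1) → ι) (t : List ι),
      IsPCycle P c ∧ List.ofFn c = List.ofFn w ++ t := by
  obtain ⟨j, hj⟩ := hP.exists_pos (w (Fin.last k))
  obtain ⟨a, v, hv0, hvlast, hv⟩ := hsc j (w 0)
  obtain ⟨m, c, hc⟩ := List.exists_ofFn_eq_of_ne_nil
    (List.append_ne_nil_of_left_ne_nil (s := List.ofFn w) (by simp) (List.ofFn v).dropLast)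
  refine ⟨m, c, _, ?_, hc⟩
  -- `w ++ v` is a closed walk (`v` ends at `w 0`); `c` is that walk without its last letter.
  have hc0 : c 0 = w 0 := by simpa [List.ofFn_succ] using congrArg List.head? hc
  have hclose : (List.ofFn v).dropLast ++ [w 0] = List.ofFn v := by
    rw [← hvlast, ← List.getLast_ofFn_succ v]
    exact List.dropLast_append_getLast _
  rw [isPCycle_iff_isChain, hc, hc0, List.append_assoc, hclose]
  refine (isPWord_iff_isChain.1 hw).append (isPWord_iff_isChain.1 hv) ?_
  rw [List.getLast?_eq_some_getLast (by simp), List.getLast_ofFn_succ]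
  simpa [hv0] using hj

end Words

section Barabanov

variable {d : ℕ} {ι : Type*}

theorem jsr_nonneg [Fintype ι] (A : ι → Matrix (Fin d) (Fin d) ℝ) : 0 ≤ jsr A :=
  Real.iInf_nonneg fun _ => Real.iSup_nonneg fun _ => Real.rpow_nonneg (norm_nonneg _) _

theorem apply_listProd_mulVec_le {A : ι → Matrix (Fin d) (Fin d) ℝ} {f : (Fin d → ℝ) → ℝ}
    {ρ : ℝ} (hρ : 0 ≤ ρ) (h : ∀ i x, f (A i *ᵥ x) ≤ ρ * f x) (l : List ι) (x : Fin d → ℝ) :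
    f ((l.map A).reverse.prod *ᵥ x) ≤ ρ ^ l.length * f x := by
  induction l generalizing x with
  | nil => simp
  | cons i l ih =>
    rw [List.map_cons, List.reverse_cons, List.prod_append, List.prod_singleton,
      ← Matrix.mulVec_mulVec, List.length_cons, pow_succ, mul_assoc]
    exact (ih _).trans (mul_le_mul_of_nonneg_left (h i x) (pow_nonneg hρ _))

theorem indNorm_listProd_le {A : ι → Matrix (Fin d) (Fin d) ℝ} {f : (Fin d → ℝ) → ℝ}
    {ρ : ℝ} (hρ : 0 ≤ ρ) (h : ∀ i x, f (A i *ᵥ x) ≤ ρ * f x) (l : List ι) :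
    indNorm f ((l.map A).reverse.prod) ≤ ρ ^ l.length :=
  indNorm_le_of_forall (pow_nonneg hρ _) (apply_listProd_mulVec_le hρ h l)

theorem prodW_eq_mul_of_ofFn_eq_append {A : ι → Matrix (Fin d) (Fin d) ℝ} {m n : ℕ}
    {c : Fin m → ι} {w : Fin n → ι} {t : List ι} (hct : List.ofFn c = List.ofFn w ++ t) :
    prodW A c = (t.map A).reverse.prod * prodW A w := by
  rw [prodW, hct, List.map_append, List.reverse_append, List.prod_append]
  rfl

namespace IsBarabanovNorm

variable [Fintype ι] {A : ι → Matrix (Fin d) (Fin d) ℝ} {nB : (Fin d → ℝ) → ℝ}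
  (hB : IsBarabanovNorm A nB)
include hB

def toSeminorm : Seminorm ℝ (Fin d → ℝ) :=
  Seminorm.of nB hB.add_le fun c x => by rw [hB.smul, Real.norm_eq_abs]

theorem indNorm_listProd_le (l : List ι) : indNorm nB ((l.map A).reverse.prod) ≤ jsr A ^ l.length :=
  JSRpaper.indNorm_listProd_le (jsr_nonneg A) hB.extremal l

theorem indNorm_prodW_le {n : ℕ} (w : Fin n → ι) : indNorm nB (prodW A w) ≤ jsr A ^ n :=
  (hB.indNorm_listProd_le (List.ofFn w)).trans_eq (by rw [List.length_ofFn])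

theorem jsr_pow_le_indNorm_of_ofFn_eq_append {m n : ℕ} {c : Fin m → ι} {w : Fin (n + 1) → ι}
    {t : List ι} (hct : List.ofFn c = List.ofFn w ++ t) (hc : jsr A ^ m ≤ specRad (prodW A c)) :
    jsr A ^ (n + 1) ≤ indNorm nB (prodW A w) := by
  have hp : ∀ x, hB.toSeminorm x = 0 → x = 0 := fun x => (hB.eq_zero_iff x).1
  have hm : m = n + t.length + 1 := by simpa using congrArg List.length hct
  have hlower : jsr A ^ t.length * jsr A ^ (n + 1) ≤ jsr A ^ t.length * indNorm nB (prodW A w) :=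
    calc jsr A ^ t.length * jsr A ^ (n + 1) = jsr A ^ m := by rw [hm]; ring
      _ ≤ specRad (prodW A c) := hc
      _ ≤ indNorm hB.toSeminorm (prodW A c) := specRad_le_indNorm hp _
      _ ≤ indNorm nB ((t.map A).reverse.prod) * indNorm nB (prodW A w) := by
          rw [prodW_eq_mul_of_ofFn_eq_append hct]
          exact indNorm_mul_le hp _ _
      _ ≤ jsr A ^ t.length * indNorm nB (prodW A w) := by
          gcongr
          · exact indNorm_nonneg hB.toSeminorm _
          · exact hB.indNorm_listProd_le t
  rcases (jsr_nonneg A).eq_or_lt with hρ0 | hρpos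
  · rw [← hρ0, zero_pow n.succ_ne_zero]
    exact indNorm_nonneg hB.toSeminorm _
  · exact le_of_mul_le_mul_left hlower (pow_pos hρpos _)

end IsBarabanovNorm

end Barabanov

theorem barabanov_norm_word_of_spectralRadius_cycle_general {d N : ℕ}
    (P : Matrix (Fin N) (Fin N) ℝ) (hP : IsStochastic P) (hsc : StronglyConnected P)
    (A : Fin N → Matrix (Fin d) (Fin d) ℝ)
    (nB : (Fin d → ℝ) → ℝ) (hB : IsBarabanovNorm A nB)
    (hcyc : ∀ (k : ℕ) (w : Fin (k + 1) → Fin N), IsPCycle P w →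
      specRad (prodW A w) ^ (((k : ℝ) + 1)⁻¹) = jsr A)
    {k : ℕ} (w : Fin (k + 1) → Fin N) (hw : IsPWord P w) :
    indNorm nB (prodW A w) ^ (((k : ℝ) + 1)⁻¹) = jsr A := by
  obtain ⟨m, c, t, hc, hct⟩ := hw.exists_isPCycle_ofFn_eq_append hP hsc
  have hspec : jsr A ^ (m + 1) = specRad (prodW A c) := by
    rw [← hcyc m c hc]
    exact_mod_cast Real.rpow_inv_natCast_pow (specRad_nonneg _) m.succ_ne_zero
  have hnorm : indNorm nB (prodW A w) = jsr A ^ (k + 1) :=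
    le_antisymm (hB.indNorm_prodW_le w) (hB.jsr_pow_le_indNorm_of_ofFn_eq_append hct hspec.le)
  rw [hnorm]
  exact_mod_cast Real.pow_rpow_inv_natCast (jsr_nonneg A) k.succ_ne_zero

/-- if every `P`-cycle realizes the joint spectral radius via its
spectral radius, then every `P`-word realizes it via its Barabanov norm. -/
theorem barabanov_norm_word_of_spectralRadius_cycle {d N : ℕ}
    (P : Matrix (Fin N) (Fin N) ℝ) (hP : IsStochastic P) (hsc : StronglyConnected P)
    (A : Fin N → Matrix (Fin d) (Fin d) ℝ) (hA : IrredTuple A)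
    (nB : (Fin d → ℝ) → ℝ) (hB : IsBarabanovNorm A nB)
    (hcyc : ∀ (k : ℕ) (w : Fin (k + 1) → Fin N), IsPCycle P w →
      specRad (prodW A w) ^ (((k : ℝ) + 1)⁻¹) = jsr A)
    {k : ℕ} (w : Fin (k + 1) → Fin N) (hw : IsPWord P w) :
    indNorm nB (prodW A w) ^ (((k : ℝ) + 1)⁻¹) = jsr A :=
  barabanov_norm_word_of_spectralRadius_cycle_general P hP hsc A nB hB hcyc w hw

end JSRpaper
end
end

section
/- Let P be a stochastic strongly connected N×N matrix with positive diagonal entries and A = (A_1, ..., A_N) be an irreducible N-tuple of invertible d×d real matrices. Then for every s ∈ {1,...,N}, the semigroup C(P,s) of matrix products along P-cycles starting at s is irreducible (has no common invariant subspace other than {0} and ℝ^d). -/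
/-!
The invertible matrices preserving `V` form a group `H` that contains every cycle product at `s`.
Since the diagonal of `P` is positive, a letter `c` of a cycle `pre ++ c :: suf` may be doubled,
and the products of the two cycles, `Π(suf) A_c Π(pre)` and `Π(suf) A_c² Π(pre)`, give
`Π(suf) A_c Π(suf)⁻¹ ∈ H`. By induction on `suf`, every suffix product, and with it every letter
`A_c` of a cycle, lies in `H`. Strong connectivity puts every index on a cycle through `s`, so `V`
is invariant under the whole tuple.
-/

open scoped BigOperators

noncomputable section
namespace JSRpaper

attribute [local instance] Matrix.linftyOpNormedRing

open Relation Matrix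

section CycleWords

variable {ι G : Type*} [Group G] {r : ι → ι → Prop} {s : ι}

def IsCycleAt (r : ι → ι → Prop) (s : ι) (l : List ι) : Prop :=
  l.head? = some s ∧ (l ++ [s]).IsChain r

def wordProd (f : ι → G) (l : List ι) : G :=
  (l.map f).reverse.prod

@[simp]
lemma wordProd_cons (f : ι → G) (c : ι) (l : List ι) :
    wordProd f (c :: l) = wordProd f l * f c := by
  simp [wordProd]

@[simp]
lemma wordProd_append (f : ι → G) (l₁ l₂ : List ι) :
    wordProd f (l₁ ++ l₂) = wordProd f l₂ * wordProd f l₁ := by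
  simp [wordProd]

lemma IsCycleAt.double (hr : ∀ i, r i i) {pre suf : List ι} {c : ι}
    (h : IsCycleAt r s (pre ++ c :: suf)) : IsCycleAt r s (pre ++ c :: c :: suf) := by
  obtain ⟨hhead, hchain⟩ := h
  simp only [List.append_assoc, List.cons_append] at hchain
  refine ⟨by cases pre <;> simp_all, ?_⟩
  simp only [List.append_assoc, List.cons_append, List.isChain_append_cons_cons]
  exact ⟨(List.isChain_split.mp hchain).1, hr c, (List.isChain_split.mp hchain).2⟩

variable {f : ι → G} {H : Subgroup G}

lemma wordProd_mem_of_isCycleAt_append (hr : ∀ i, r i i)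
    (hH : ∀ l, IsCycleAt r s l → wordProd f l ∈ H) :
    ∀ suf pre : List ι, IsCycleAt r s (pre ++ suf) → wordProd f suf ∈ H
  | [], _, _ => H.one_mem
  | c :: suf, pre, hl => by
    have hsuf : wordProd f suf ∈ H :=
      wordProd_mem_of_isCycleAt_append hr hH suf (pre ++ [c]) (by simpa using hl)
    have hconj : wordProd f suf * f c * (wordProd f suf)⁻¹ ∈ H := by
      have h₁ := hH _ hl
      have h₂ := hH _ (hl.double hr)
      simp only [wordProd_append, wordProd_cons] at h₁ h₂
      convert H.mul_mem h₂ (H.inv_mem h₁) using 1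
      group
    have hc : f c ∈ H := by
      convert H.mul_mem (H.mul_mem (H.inv_mem hsuf) hconj) hsuf using 1
      group
    simpa using H.mul_mem hsuf hc

lemma apply_mem_of_mem_isCycleAt (hr : ∀ i, r i i) (hH : ∀ l, IsCycleAt r s l → wordProd f l ∈ H)
    {l : List ι} (hl : IsCycleAt r s l) {c : ι} (hc : c ∈ l) : f c ∈ H := by
  obtain ⟨pre, suf, rfl⟩ := List.append_of_mem hc
  have h₁ := wordProd_mem_of_isCycleAt_append hr hH (c :: suf) pre hl
  have h₂ := wordProd_mem_of_isCycleAt_append hr hH suf (pre ++ [c]) (by simpa using hl)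
  rw [wordProd_cons] at h₁
  simpa using H.mul_mem (H.inv_mem h₂) h₁

lemma exists_isCycleAt_mem (hr : ∀ i, r i i) {i : ι} (hsi : ReflTransGen r s i)
    (his : ReflTransGen r i s) : ∃ l, IsCycleAt r s l ∧ i ∈ l := by
  obtain ⟨l₁, hl₁, hl₁_last⟩ := List.exists_isChain_cons_of_relationReflTransGen hsi
  obtain ⟨l₂, hl₂, hl₂_last⟩ := List.exists_isChain_cons_of_relationReflTransGen his
  refine ⟨(s :: l₁) ++ (i :: l₂), ⟨rfl, ?_⟩, by simp⟩
  rw [List.append_assoc, List.isChain_append, List.isChain_append]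
  refine ⟨hl₁, ⟨hl₂, List.isChain_singleton s, ?_⟩, ?_⟩
  · simp [List.getLast?_eq_some_getLast, hl₂_last, hr s]
  · simp [List.getLast?_eq_some_getLast, hl₁_last, hr i]

theorem apply_mem_of_forall_isCycleAt (hr : ∀ i, r i i) (hconn : ∀ i j, ReflTransGen r i j)
    (hH : ∀ l, IsCycleAt r s l → wordProd f l ∈ H) (i : ι) : f i ∈ H := by
  obtain ⟨l, hl, hi⟩ := exists_isCycleAt_mem hr (hconn s i) (hconn i s)
  exact apply_mem_of_mem_isCycleAt hr hH hl hi

end CycleWords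

section Stabilizer

variable {n K : Type*} [Fintype n] [DecidableEq n] [Field K]

def stabilizer (V : Submodule K (n → K)) : Subgroup (Matrix n n K)ˣ where
  carrier := {u | ∀ x ∈ V, (u : Matrix n n K) *ᵥ x ∈ V ∧ (↑u⁻¹ : Matrix n n K) *ᵥ x ∈ V}
  one_mem' x hx := by simpa using hx
  mul_mem' {u v} hu hv x hx := by
    simp only [_root_.mul_inv_rev, Units.val_mul, ← mulVec_mulVec]
    exact ⟨(hu _ (hv x hx).1).1, (hv _ (hu x hx).2).2⟩
  inv_mem' {u} hu x hx := by simpa [and_comm] using hu x hx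

/-- `u` restricts to an injective, hence surjective, endomorphism of the finite-dimensional `V`. -/
lemma mem_stabilizer_of_mapsTo {V : Submodule K (n → K)} {u : (Matrix n n K)ˣ}
    (hu : ∀ x ∈ V, (u : Matrix n n K) *ᵥ x ∈ V) : u ∈ stabilizer V := by
  intro x hx
  refine ⟨hu x hx, ?_⟩
  let g : V →ₗ[K] V := (u : Matrix n n K).mulVecLin.restrict hu
  have hinj : Function.Injective g := fun y z hyz =>
    Subtype.ext (mulVec_injective_of_isUnit u.isUnit (congrArg Subtype.val hyz))
  obtain ⟨y, hy⟩ := LinearMap.injective_iff_surjective.mp hinj ⟨x, hx⟩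
  have hyx : (u : Matrix n n K) *ᵥ (y : n → K) = x := congrArg Subtype.val hy
  rw [← hyx, mulVec_mulVec, Units.inv_mul, one_mulVec]
  exact y.2

end Stabilizer

lemma IsPWord.reflTransGen {ι : Type*} {P : Matrix ι ι ℝ} {k : ℕ} {w : Fin (k + 1) → ι}
    (hw : IsPWord P w) : ReflTransGen (fun a b => 0 < P a b) (w 0) (w (Fin.last k)) := by
  induction Fin.last k using Fin.induction with
  | zero => rfl
  | succ t ih => exact ih.tail (hw t)

lemma StronglyConnected.reflTransGen {ι : Type*} {P : Matrix ι ι ℝ} (hP : StronglyConnected P)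
    (i j : ι) : ReflTransGen (fun a b => 0 < P a b) i j := by
  obtain ⟨k, w, rfl, rfl, hw⟩ := hP i j
  exact hw.reflTransGen

lemma isPCycle_get {ι : Type*} {P : Matrix ι ι ℝ} {s : ι} {t : List ι}
    (h : IsCycleAt (fun a b => 0 < P a b) s (s :: t)) : IsPCycle P (s :: t).get := by
  have h' := List.isChain_iff_getElem.mp h.2
  refine ⟨fun j => ?_, ?_⟩
  · have hj := h' j (by simp)
    rwa [List.getElem_append_left (by simp), List.getElem_append_left (by simp)] at hj
  · have hlast := h' t.length (by simp)
    rw [List.getElem_append_left (by simp), List.getElem_append_right (by simp)] at hlast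
    simpa using hlast

lemma val_wordProd {ι : Type*} {d : ℕ} (A : ι → (Matrix (Fin d) (Fin d) ℝ)ˣ) (l : List ι) :
    ((wordProd A l : (Matrix (Fin d) (Fin d) ℝ)ˣ) : Matrix (Fin d) (Fin d) ℝ) =
      prodW (fun i => (A i : Matrix (Fin d) (Fin d) ℝ)) l.get := by
  rw [wordProd, prodW, List.ofFn_get, ← Units.coeHom_apply, map_list_prod]
  simp [List.map_reverse, Function.comp_def]

theorem cycle_semigroup_irreducible_general {d N : ℕ}
    (P : Matrix (Fin N) (Fin N) ℝ) (hsc : StronglyConnected P)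
    (hdiag : ∀ i, 0 < P i i)
    (A : Fin N → Matrix (Fin d) (Fin d) ℝ) (hA : IrredTuple A)
    (hinv : ∀ i, IsUnit (A i)) (s : Fin N)
    (V : Submodule ℝ (Fin d → ℝ))
    (hV : ∀ (k : ℕ) (w : Fin (k + 1) → Fin N), IsPCycle P w → w 0 = s →
      ∀ x ∈ V, (prodW A w).mulVec x ∈ V) :
    V = ⊥ ∨ V = ⊤ := by
  let uA : Fin N → (Matrix (Fin d) (Fin d) ℝ)ˣ := fun i => (hinv i).unit
  have hcycle : ∀ l, IsCycleAt (fun a b => 0 < P a b) s l → wordProd uA l ∈ stabilizer V := by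
    rintro (_ | ⟨a, t⟩) hl
    · exact absurd hl.1 (by simp)
    obtain rfl : a = s := by simpa using hl.1
    refine mem_stabilizer_of_mapsTo fun x hx => ?_
    rw [val_wordProd]
    exact hV _ _ (isPCycle_get hl) rfl x hx
  refine hA V fun i x hx => ?_
  exact (apply_mem_of_forall_isCycleAt hdiag hsc.reflTransGen hcycle i x hx).1

/-- for a stochastic strongly connected `P` with positive diagonal and
an irreducible tuple of invertible matrices, each semigroup `C(P, s)` is irreducible. -/
theorem cycle_semigroup_irreducible {d N : ℕ}
    (P : Matrix (Fin N) (Fin N) ℝ) (hP : IsStochastic P) (hsc : StronglyConnected P)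
    (hdiag : ∀ i, 0 < P i i)
    (A : Fin N → Matrix (Fin d) (Fin d) ℝ) (hA : IrredTuple A)
    (hinv : ∀ i, IsUnit (A i)) (s : Fin N)
    (V : Submodule ℝ (Fin d → ℝ))
    (hV : ∀ (k : ℕ) (w : Fin (k + 1) → Fin N), IsPCycle P w → w 0 = s →
      ∀ x ∈ V, (prodW A w).mulVec x ∈ V) :
    V = ⊥ ∨ V = ⊤ :=
  cycle_semigroup_irreducible_general P hsc hdiag A hA hinv s V hV

end JSRpaper
end
end

section
/- Let A = (A_1, ..., A_N) be an irreducible N-tuple of invertible d×d real matrices and P a stochastic strongly connected matrix with positive diagonal entries. If there exists an invertible G ∈ M_d(ℝ) such that ρ_d(A)^{-1} G A_i G^{-1} is orthogonal for every i ∈ {1,...,N}, then ρ_d(A) = ρ_p(P, A). -/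
/-!
Put `ρ = ρ_d(A)` and `Q_i = ρ⁻¹ G A_i G⁻¹`. Every product then factors as
`A_{i_n} ⋯ A_{i_1} = ρⁿ G⁻¹ (Q_{i_n} ⋯ Q_{i_1}) G` with an orthogonal middle factor, so its norm
lies between `ρⁿ / K` and `K ρⁿ` for a constant `K` independent of the word. Hence
`‖A_{i_n} ⋯ A_{i_1}‖^{1/n} → ρ` uniformly in the word, and so does every Markov average of these
quantities: `ρ_p(ν, P, A) = ρ` for every invariant probability `ν` of `P`. Such a `ν` exists because
`1` is an eigenvalue of `Pᵀ`, and the absolute value of a left eigenvector of a stochastic matrix is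
again a left eigenvector.
-/

open scoped BigOperators

noncomputable section
namespace JSRpaper

attribute [local instance] Matrix.linftyOpNormedRing

attribute [local instance] Matrix.linfty_opNormOneClass Matrix.linftyOpNormSMulClass

open Matrix Filter Topology

section Words

variable {d : ℕ} {ι : Type*}

lemma list_prod_map_smul_conj {G : Matrix (Fin d) (Fin d) ℝ} (hG : IsUnit G) (c : ℝ)
    (B : ι → Matrix (Fin d) (Fin d) ℝ) (l : List ι) :
    (l.map fun i => c • (G * B i * G⁻¹)).prod = c ^ l.length • (G * (l.map B).prod * G⁻¹) := by
  have hdet := (isUnit_iff_isUnit_det G).mp hG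
  induction l with
  | nil => simp [mul_nonsing_inv G hdet]
  | cons i l ih =>
    rw [List.map_cons, List.prod_cons, ih, smul_mul_smul_comm, List.length_cons, pow_succ']
    simp only [List.map_cons, List.prod_cons, mul_assoc,
      nonsing_inv_mul_cancel_left (A := G) _ hdet]

lemma prodW_smul_conj {G : Matrix (Fin d) (Fin d) ℝ} (hG : IsUnit G) (c : ℝ)
    (B : ι → Matrix (Fin d) (Fin d) ℝ) {n : ℕ} (w : Fin n → ι) :
    prodW (fun i => c • (G * B i * G⁻¹)) w = c ^ n • (G * prodW B w * G⁻¹) := by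
  rw [prodW, prodW, ← List.map_reverse, ← List.map_reverse, list_prod_map_smul_conj hG,
    List.length_reverse, List.length_ofFn]

lemma prodW_mem_unitaryGroup {Q : ι → Matrix (Fin d) (Fin d) ℝ}
    (hQ : ∀ i, Q i ∈ unitaryGroup (Fin d) ℝ) {n : ℕ} (w : Fin n → ι) :
    prodW Q w ∈ unitaryGroup (Fin d) ℝ :=
  Submonoid.list_prod_mem _ fun R hR => by
    obtain ⟨i, -, rfl⟩ := List.mem_map.mp (List.mem_reverse.mp hR)
    exact hQ i

end Words

section Unitary

variable {d : ℕ} {R : Matrix (Fin d) (Fin d) ℝ}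

lemma norm_le_of_mem_unitaryGroup (hR : R ∈ unitaryGroup (Fin d) ℝ) : ‖R‖ ≤ d := by
  suffices ‖R‖₊ ≤ d by exact_mod_cast this
  rw [linfty_opNNNorm_def]
  refine Finset.sup_le fun i _ => ?_
  calc ∑ j, ‖R i j‖₊ ≤ Finset.univ.card • 1 :=
        Finset.sum_le_card_nsmul _ _ _ fun j _ => entry_norm_bound_of_unitary hR i j
    _ = d := by simp

lemma inv_le_norm_of_mem_unitaryGroup [Nonempty (Fin d)] (hR : R ∈ unitaryGroup (Fin d) ℝ) :
    (d : ℝ)⁻¹ ≤ ‖R‖ := by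
  have hd : (0 : ℝ) < d := by exact_mod_cast Fin.pos_iff_nonempty.mpr ‹_›
  rw [inv_le_iff_one_le_mul₀ hd]
  calc (1 : ℝ) = ‖R * star R‖ := by rw [(mem_unitaryGroup_iff.mp hR), norm_one]
    _ ≤ ‖R‖ * ‖star R‖ := norm_mul_le _ _
    _ ≤ ‖R‖ * d := by
        gcongr; exact norm_le_of_mem_unitaryGroup (Unitary.star_mem hR)

end Unitary

lemma exists_norm_prodW_bounds {d : ℕ} [Nonempty (Fin d)] {ι : Type*}
    {A : ι → Matrix (Fin d) (Fin d) ℝ} {ρ : ℝ} (hρ : 0 < ρ) {G : Matrix (Fin d) (Fin d) ℝ}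
    (hG : IsUnit G) (hQ : ∀ i, ρ⁻¹ • (G * A i * G⁻¹) ∈ unitaryGroup (Fin d) ℝ) :
    ∃ K > 0, ∀ {n : ℕ} (w : Fin n → ι),
      ρ ^ n / K ≤ ‖prodW A w‖ ∧ ‖prodW A w‖ ≤ K * ρ ^ n := by
  have hdet := (isUnit_iff_isUnit_det G).mp hG
  have hd : (0 : ℝ) < d := by exact_mod_cast Fin.pos_iff_nonempty.mpr ‹_›
  have hG₀ : 0 < ‖G‖ := norm_pos_iff.mpr hG.ne_zero
  have hGinv₀ : 0 < ‖G⁻¹‖ := norm_pos_iff.mpr (isUnit_nonsing_inv_iff.mpr hG).ne_zero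
  refine ⟨d * ‖G‖ * ‖G⁻¹‖, by positivity, fun {n} w => ?_⟩
  set R := prodW (fun i => ρ⁻¹ • (G * A i * G⁻¹)) w with hRdef
  have hR : R ∈ unitaryGroup (Fin d) ℝ := prodW_mem_unitaryGroup hQ w
  have hconj : ‖G * prodW A w * G⁻¹‖ = ρ ^ n * ‖R‖ := by
    rw [hRdef, prodW_smul_conj hG, norm_smul, norm_pow, norm_inv, Real.norm_of_nonneg hρ.le,
      inv_pow, mul_inv_cancel_left₀ (pow_ne_zero n hρ.ne')]
  constructor
  · rw [div_le_iff₀ (by positivity)]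
    calc ρ ^ n = ρ ^ n * (d : ℝ)⁻¹ * d := by field_simp
      _ ≤ ρ ^ n * ‖R‖ * d := by gcongr; exact inv_le_norm_of_mem_unitaryGroup hR
      _ ≤ ‖G‖ * ‖prodW A w‖ * ‖G⁻¹‖ * d :=
          mul_le_mul_of_nonneg_right (hconj ▸ norm_mul₃_le ..) hd.le
      _ = ‖prodW A w‖ * (d * ‖G‖ * ‖G⁻¹‖) := by ring
  · calc ‖prodW A w‖ = ‖G⁻¹ * (G * prodW A w * G⁻¹) * G‖ := by
          simp only [← mul_assoc, nonsing_inv_mul G hdet, one_mul,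
            nonsing_inv_mul_cancel_right (A := G) _ hdet]
      _ ≤ ‖G⁻¹‖ * (ρ ^ n * ‖R‖) * ‖G‖ := hconj ▸ norm_mul₃_le ..
      _ ≤ ‖G⁻¹‖ * (ρ ^ n * d) * ‖G‖ := by gcongr; exact norm_le_of_mem_unitaryGroup hR
      _ = d * ‖G‖ * ‖G⁻¹‖ * ρ ^ n := by ring

section Markov

variable {ι : Type*} [Fintype ι] {ν : ι → ℝ} {P : Matrix ι ι ℝ}

lemma chainWt_nonneg (hν : ∀ i, 0 ≤ ν i) (hP : ∀ i j, 0 ≤ P i j) {n : ℕ}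
    (w : Fin (n + 1) → ι) : 0 ≤ chainWt ν P w :=
  mul_nonneg (hν _) (Finset.prod_nonneg fun _ _ => hP _ _)

lemma chainWt_snoc {n : ℕ} (u : Fin (n + 1) → ι) (j : ι) :
    chainWt ν P (Fin.snoc u j : Fin (n + 2) → ι) = chainWt ν P u * P (u (Fin.last n)) j := by
  have h0 : (Fin.snoc u j : Fin (n + 2) → ι) 0 = u 0 := Fin.snoc_castSucc (i := 0) ..
  simp only [chainWt, h0, Fin.prod_univ_castSucc, Fin.succ_castSucc, Fin.snoc_castSucc,
    Fin.succ_last, Fin.snoc_last, mul_assoc]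

lemma sum_chainWt_eq_one (hν : ∑ i, ν i = 1) (hP : ∀ i, ∑ j, P i j = 1) (n : ℕ) :
    ∑ w : Fin (n + 1) → ι, chainWt ν P w = 1 := by
  induction n with
  | zero =>
    rw [← hν]
    exact Fintype.sum_equiv (Equiv.funUnique (Fin 1) ι) _ _ fun w => by simp [chainWt]
  | succ n ih =>
    rw [← (Fin.snocEquiv fun _ => ι).sum_comp, Fintype.sum_prod_type, Finset.sum_comm]
    change ∑ u : Fin (n + 1) → ι, ∑ j, chainWt ν P (Fin.snoc u j : Fin (n + 2) → ι) = 1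
    simp [chainWt_snoc, ← Finset.mul_sum, hP, ih]

end Markov

lemma pow_succ_rpow_inv {x : ℝ} (hx : 0 ≤ x) (n : ℕ) : (x ^ (n + 1)) ^ ((n : ℝ) + 1)⁻¹ = x := by
  simpa using Real.pow_rpow_inv_natCast hx n.succ_ne_zero

lemma tendsto_rpow_inv_add_one {K : ℝ} (hK : 0 < K) :
    Tendsto (fun n : ℕ => K ^ ((n : ℝ) + 1)⁻¹) atTop (𝓝 1) := by
  simpa [Function.comp_def] using (Real.continuousAt_const_rpow hK.ne').tendsto.comp
    tendsto_one_div_add_atTop_nhds_zero_nat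

lemma rhoP_eq_of_norm_prodW_bounds {d : ℕ} {ι : Type*} [Fintype ι] [DecidableEq ι]
    {A : ι → Matrix (Fin d) (Fin d) ℝ} {ρ K : ℝ} (hρ : 0 < ρ) (hK : 0 < K)
    (hA : ∀ {n : ℕ} (w : Fin n → ι), ρ ^ n / K ≤ ‖prodW A w‖ ∧ ‖prodW A w‖ ≤ K * ρ ^ n)
    {ν : ι → ℝ} {P : Matrix ι ι ℝ} (hν : ∀ i, 0 ≤ ν i) (hν₁ : ∑ i, ν i = 1)
    (hP : IsStochastic P) : rhoP ν P A = ρ := by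
  have hroot : ∀ {n : ℕ} (w : Fin (n + 1) → ι),
      ρ / K ^ ((n : ℝ) + 1)⁻¹ ≤ ‖prodW A w‖ ^ ((n : ℝ) + 1)⁻¹ ∧
        ‖prodW A w‖ ^ ((n : ℝ) + 1)⁻¹ ≤ K ^ ((n : ℝ) + 1)⁻¹ * ρ := fun {n} w => by
    constructor
    · calc ρ / K ^ ((n : ℝ) + 1)⁻¹ = (ρ ^ (n + 1) / K) ^ ((n : ℝ) + 1)⁻¹ := by
            rw [Real.div_rpow (by positivity) hK.le, pow_succ_rpow_inv hρ.le]
        _ ≤ _ := Real.rpow_le_rpow (by positivity) (hA w).1 (by positivity)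
    · calc _ ≤ (K * ρ ^ (n + 1)) ^ ((n : ℝ) + 1)⁻¹ :=
            Real.rpow_le_rpow (norm_nonneg _) (hA w).2 (by positivity)
        _ = K ^ ((n : ℝ) + 1)⁻¹ * ρ := by
            rw [Real.mul_rpow hK.le (by positivity), pow_succ_rpow_inv hρ.le]
  have hwt := sum_chainWt_eq_one hν₁ hP.2
  have hmean : ∀ n : ℕ,
      ρ / K ^ ((n : ℝ) + 1)⁻¹ ≤
          ∑ w : Fin (n + 1) → ι, chainWt ν P w * ‖prodW A w‖ ^ ((n : ℝ) + 1)⁻¹ ∧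
        ∑ w : Fin (n + 1) → ι, chainWt ν P w * ‖prodW A w‖ ^ ((n : ℝ) + 1)⁻¹ ≤
          K ^ ((n : ℝ) + 1)⁻¹ * ρ := fun n => by
    constructor
    · calc _ = ∑ w : Fin (n + 1) → ι, chainWt ν P w * (ρ / K ^ ((n : ℝ) + 1)⁻¹) := by
            rw [← Finset.sum_mul, hwt, one_mul]
        _ ≤ _ := Finset.sum_le_sum fun w _ =>
            mul_le_mul_of_nonneg_left (hroot w).1 (chainWt_nonneg hν hP.1 w)
    · calc _ ≤ ∑ w : Fin (n + 1) → ι, chainWt ν P w * (K ^ ((n : ℝ) + 1)⁻¹ * ρ) :=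
            Finset.sum_le_sum fun w _ =>
              mul_le_mul_of_nonneg_left (hroot w).2 (chainWt_nonneg hν hP.1 w)
        _ = _ := by rw [← Finset.sum_mul, hwt, one_mul]
  have hKe := tendsto_rpow_inv_add_one hK
  exact (tendsto_of_tendsto_of_tendsto_of_le_of_le
    (by simpa [div_eq_mul_inv] using (hKe.inv₀ one_ne_zero).const_mul ρ)
    (by simpa using hKe.mul_const ρ)
    (fun n => (hmean n).1) (fun n => (hmean n).2)).limsup_eq

section Invariant

variable {ι : Type*} [Fintype ι] {P : Matrix ι ι ℝ}

lemma exists_ne_zero_vecMul_eq_self [DecidableEq ι] [Nonempty ι] (hP : ∀ i, ∑ j, P i j = 1) :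
    ∃ v ≠ 0, v ᵥ* P = v := by
  have hdet : (P - 1).det = 0 := by
    refine exists_mulVec_eq_zero_iff.mp ⟨1, one_ne_zero, ?_⟩
    rw [sub_mulVec, one_mulVec, sub_eq_zero]
    ext i
    simp [mulVec, dotProduct, hP]
  obtain ⟨v, hv, hvP⟩ := exists_vecMul_eq_zero_iff.mpr hdet
  exact ⟨v, hv, by rwa [vecMul_sub, vecMul_one, sub_eq_zero] at hvP⟩

lemma abs_vecMul_eq_abs_of_vecMul_eq_self (hP : IsStochastic P) {v : ι → ℝ} (hv : v ᵥ* P = v) :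
    |v| ᵥ* P = |v| := by
  have hle : ∀ j, |v j| ≤ (|v| ᵥ* P) j := fun j => by
    calc |v j| = |∑ i, v i * P i j| := by rw [← congrFun hv j]; rfl
      _ ≤ ∑ i, |v i * P i j| := Finset.abs_sum_le_sum_abs _ _
      _ = (|v| ᵥ* P) j := by simp [vecMul, dotProduct, abs_mul, abs_of_nonneg (hP.1 _ _)]
  have hsum : ∑ j, |v j| = ∑ j, (|v| ᵥ* P) j := by
    simp [vecMul, dotProduct, Finset.sum_comm (γ := ι) (f := fun i j => |v j| * P j i),
      ← Finset.mul_sum, hP.2]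
  funext j
  exact ((Finset.sum_eq_sum_iff_of_le fun j _ => hle j).mp hsum j (Finset.mem_univ _)).symm

lemma exists_isInvProb [DecidableEq ι] [Nonempty ι] (hP : IsStochastic P) : ∃ ν, IsInvProb ν P := by
  obtain ⟨v, hv₀, hv⟩ := exists_ne_zero_vecMul_eq_self hP.2
  obtain ⟨i, hi⟩ := Function.ne_iff.mp hv₀
  have hpos : 0 < ∑ i, |v i| := (abs_pos.mpr hi).trans_le
    (Finset.single_le_sum (fun j _ => abs_nonneg (v j)) (Finset.mem_univ i))
  refine ⟨fun i => |v i| / ∑ j, |v j|, fun i => by positivity,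
    by rw [← Finset.sum_div, div_self hpos.ne'], fun j => ?_⟩
  have hj := congrFun (abs_vecMul_eq_abs_of_vecMul_eq_self hP hv) j
  simp only [vecMul, dotProduct, Pi.abs_apply] at hj
  simp only [div_mul_eq_mul_div, ← Finset.sum_div, hj]

end Invariant

section Radii

variable {d : ℕ} {ι : Type*} [Fintype ι] {A : ι → Matrix (Fin d) (Fin d) ℝ}

lemma jsr_nonneg_s14 : 0 ≤ jsr A :=
  le_ciInf fun _ => Real.iSup_nonneg fun _ => by positivity

lemma jsr_eq_zero_of_norm_prodW_eq_zero (h : ∀ n (w : Fin (n + 1) → ι), ‖prodW A w‖ = 0) :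
    jsr A = 0 := by
  simp [jsr, h, Real.zero_rpow, Nat.cast_add_one_ne_zero]

variable [DecidableEq ι]

lemma rhoP_eq_zero_of_norm_prodW_eq_zero (h : ∀ n (w : Fin (n + 1) → ι), ‖prodW A w‖ = 0)
    (ν : ι → ℝ) (P : Matrix ι ι ℝ) : rhoP ν P A = 0 := by
  simp [rhoP, h, Real.zero_rpow, Nat.cast_add_one_ne_zero]

lemma rhoPP_eq_zero_of_forall_rhoP_eq_zero {P : Matrix ι ι ℝ} (h : ∀ ν, rhoP ν P A = 0) :
    rhoPP P A = 0 :=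
  le_antisymm (Real.sSup_nonpos fun _ ⟨ν, _, hr⟩ => (hr.trans (h ν)).le)
    (Real.sSup_nonneg fun _ ⟨ν, _, hr⟩ => (hr.trans (h ν)).ge)

lemma rhoPP_eq_of_forall_rhoP_eq {P : Matrix ι ι ℝ} {c : ℝ} (hex : ∃ ν, IsInvProb ν P)
    (h : ∀ ν, IsInvProb ν P → rhoP ν P A = c) : rhoPP P A = c := by
  have hset : {r | ∃ ν, IsInvProb ν P ∧ r = rhoP ν P A} = {c} := by
    ext r
    constructor
    · rintro ⟨ν, hν, rfl⟩
      exact h ν hν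
    · rintro rfl
      obtain ⟨ν, hν⟩ := hex
      exact ⟨ν, hν, (h ν hν).symm⟩
  rw [rhoPP, hset, csSup_singleton]

end Radii

open Matrix in
theorem jsr_eq_rhoPP_of_orthogonal_general {d N : ℕ}
    (P : Matrix (Fin N) (Fin N) ℝ) (hP : IsStochastic P)
    (A : Fin N → Matrix (Fin d) (Fin d) ℝ)
    (G : Matrix (Fin d) (Fin d) ℝ) (hG : IsUnit G)
    (horth : ∀ i, ((jsr A)⁻¹ • (G * A i * G⁻¹))ᵀ * ((jsr A)⁻¹ • (G * A i * G⁻¹)) = 1) :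
    jsr A = rhoPP P A := by
  -- this covers the degenerate cases `d = 0` and `N = 0`
  by_cases h₀ : ∀ n (w : Fin (n + 1) → Fin N), ‖prodW A w‖ = 0
  · rw [jsr_eq_zero_of_norm_prodW_eq_zero h₀, rhoPP_eq_zero_of_forall_rhoP_eq_zero
      fun ν => rhoP_eq_zero_of_norm_prodW_eq_zero h₀ ν P]
  push Not at h₀
  obtain ⟨n, w, hw⟩ := h₀
  have : Nonempty (Fin N) := ⟨w 0⟩
  have : Nonempty (Fin d) := by
    by_contra hd
    rw [not_nonempty_iff] at hd
    exact hw (by rw [Subsingleton.elim (prodW A w) 0, norm_zero])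
  have hρ : 0 < jsr A := jsr_nonneg_s14.lt_of_ne fun h => by
    simpa [← h] using horth (w 0)
  have hU : ∀ i, (jsr A)⁻¹ • (G * A i * G⁻¹) ∈ unitaryGroup (Fin d) ℝ := fun i => by
    rw [mem_unitaryGroup_iff', star_eq_conjTranspose, conjTranspose_eq_transpose_of_trivial]
    exact horth i
  obtain ⟨K, hK, hbounds⟩ := exists_norm_prodW_bounds hρ hG hU
  exact (rhoPP_eq_of_forall_rhoP_eq (exists_isInvProb hP) fun ν hν =>
    rhoP_eq_of_norm_prodW_bounds hρ hK hbounds hν.1 hν.2.1 hP).symm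

open Matrix in
/-- if the matrices `ρ_d(A)⁻¹ G A_i G⁻¹` are all orthogonal for some
invertible `G`, then `ρ_d(A) = ρ_p(P, A)`. -/
theorem jsr_eq_rhoPP_of_orthogonal {d N : ℕ}
    (P : Matrix (Fin N) (Fin N) ℝ) (hP : IsStochastic P) (hsc : StronglyConnected P)
    (hdiag : ∀ i, 0 < P i i)
    (A : Fin N → Matrix (Fin d) (Fin d) ℝ) (hA : IrredTuple A)
    (hinv : ∀ i, IsUnit (A i))
    (G : Matrix (Fin d) (Fin d) ℝ) (hG : IsUnit G)
    (horth : ∀ i, ((jsr A)⁻¹ • (G * A i * G⁻¹))ᵀ * ((jsr A)⁻¹ • (G * A i * G⁻¹)) = 1) :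
    jsr A = rhoPP P A :=
  jsr_eq_rhoPP_of_orthogonal_general P hP A G hG horth

end JSRpaper
end
end
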